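/- Let A, B be bounded operators between Hilbert spaces with A having closed range, and let A† be its bounded Moore-Penrose inverse. Then AA*A = AB*A if and only if A† B A† = A†. -/

import Mathlib

open ContinuousLinearMap

/-- The orthogonal projection onto the closure of the range of `A`. -/
noncomputable def projCR {E F : Type*} [NormedAddCommGroup E] [InnerProductSpace ℂ E]
    [NormedAddCommGroup F] [InnerProductSpace ℂ F] [CompleteSpace F]
    (A : E →L[ℂ] F) : F →L[ℂ] F :=
  (LinearMap.range (A : E →ₗ[ℂ] F)).topologicalClosure.subtypeL ∘L
    Submodule.orthogonalProjectionOnto (LinearMap.range (A : E →ₗ[ℂ] F)).topologicalClosure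

/-- `Td` is the (bounded) Moore-Penrose inverse of `T`: `T Td = P_T`, `Td T = P_{T*}`,
and `Td T Td = Td`. -/
def IsMPInv {E F : Type*} [NormedAddCommGroup E] [InnerProductSpace ℂ E] [CompleteSpace E]
    [NormedAddCommGroup F] [InnerProductSpace ℂ F] [CompleteSpace F]
    (T : E →L[ℂ] F) (Td : F →L[ℂ] E) : Prop :=
  T ∘L Td = projCR T ∧ Td ∘L T = projCR (adjoint T) ∧ Td ∘L (T ∘L Td) = Td

/-
The four Penrose equations let `A*` and `A†` be recovered from each other by sandwiching:
`A† = A† A†* A*` and `A† = A* A†* A†`, while `A* = A* A A†` and `A* = A† A A*`. Hence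
`A* X A* = A* Y A*` if and only if `A† X A† = A† Y A†`. Taking `Y = A` and using `A† A A† = A†`,
the claim becomes the adjoint of `A A* A = A B* A`.
-/

section projCR

variable {E F : Type*} [NormedAddCommGroup E] [InnerProductSpace ℂ E]
  [NormedAddCommGroup F] [InnerProductSpace ℂ F] [CompleteSpace F]

lemma adjoint_projCR (A : E →L[ℂ] F) : adjoint (projCR A) = projCR A :=
  isSelfAdjoint_starProjection _

lemma projCR_comp_self (A : E →L[ℂ] F) : projCR A ∘L A = A := by
  ext x
  exact Submodule.starProjection_eq_self_iff.mpr
    (Submodule.le_topologicalClosure _ (LinearMap.mem_range_self _ x))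

end projCR

namespace IsMPInv

variable {E F : Type*} [NormedAddCommGroup E] [InnerProductSpace ℂ E] [CompleteSpace E]
  [NormedAddCommGroup F] [InnerProductSpace ℂ F] [CompleteSpace F]
  {A : E →L[ℂ] F} {Ad : F →L[ℂ] E}

lemma self_comp_inv_comp_self (h : IsMPInv A Ad) : A ∘L (Ad ∘L A) = A := by
  rw [← comp_assoc, h.1, projCR_comp_self]

lemma inv_comp_self_comp_inv (h : IsMPInv A Ad) : Ad ∘L (A ∘L Ad) = Ad :=
  h.2.2

lemma adjoint_self_comp_inv (h : IsMPInv A Ad) : adjoint (A ∘L Ad) = A ∘L Ad := by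
  rw [h.1, adjoint_projCR]

lemma adjoint_inv_comp_self (h : IsMPInv A Ad) : adjoint (Ad ∘L A) = Ad ∘L A := by
  rw [h.2.1, adjoint_projCR]

lemma inv_comp_adjoint_inv_comp_adjoint (h : IsMPInv A Ad) :
    Ad ∘L (adjoint Ad ∘L adjoint A) = Ad := by
  rw [← adjoint_comp, h.adjoint_self_comp_inv, h.inv_comp_self_comp_inv]

lemma adjoint_comp_adjoint_inv_comp_inv (h : IsMPInv A Ad) :
    adjoint A ∘L (adjoint Ad ∘L Ad) = Ad := by
  rw [← comp_assoc, ← adjoint_comp, h.adjoint_inv_comp_self, comp_assoc, h.inv_comp_self_comp_inv]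

lemma adjoint_comp_self_comp_inv (h : IsMPInv A Ad) : adjoint A ∘L (A ∘L Ad) = adjoint A := by
  rw [← h.adjoint_self_comp_inv, ← adjoint_comp, comp_assoc, h.self_comp_inv_comp_self]

lemma inv_comp_self_comp_adjoint (h : IsMPInv A Ad) : Ad ∘L (A ∘L adjoint A) = adjoint A := by
  rw [← comp_assoc, ← h.adjoint_inv_comp_self, ← adjoint_comp, h.self_comp_inv_comp_self]

lemma inv_comp_comp_inv_eq (h : IsMPInv A Ad) (X : E →L[ℂ] F) :
    Ad ∘L (X ∘L Ad) =
      Ad ∘L (adjoint Ad ∘L ((adjoint A ∘L (X ∘L adjoint A)) ∘L (adjoint Ad ∘L Ad))) :=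
  calc Ad ∘L (X ∘L Ad)
      = (Ad ∘L (adjoint Ad ∘L adjoint A)) ∘L (X ∘L (adjoint A ∘L (adjoint Ad ∘L Ad))) := by
        rw [h.inv_comp_adjoint_inv_comp_adjoint, h.adjoint_comp_adjoint_inv_comp_inv]
    _ = _ := by simp only [comp_assoc]

lemma adjoint_comp_comp_adjoint_eq (h : IsMPInv A Ad) (X : E →L[ℂ] F) :
    adjoint A ∘L (X ∘L adjoint A) =
      adjoint A ∘L (A ∘L ((Ad ∘L (X ∘L Ad)) ∘L (A ∘L adjoint A))) :=
  calc adjoint A ∘L (X ∘L adjoint A)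
      = (adjoint A ∘L (A ∘L Ad)) ∘L (X ∘L (Ad ∘L (A ∘L adjoint A))) := by
        rw [h.adjoint_comp_self_comp_inv, h.inv_comp_self_comp_adjoint]
    _ = _ := by simp only [comp_assoc]

lemma adjoint_comp_comp_adjoint_eq_iff (h : IsMPInv A Ad) (X Y : E →L[ℂ] F) :
    adjoint A ∘L (X ∘L adjoint A) = adjoint A ∘L (Y ∘L adjoint A) ↔
      Ad ∘L (X ∘L Ad) = Ad ∘L (Y ∘L Ad) := by
  constructor
  · intro hXY
    rw [h.inv_comp_comp_inv_eq X, h.inv_comp_comp_inv_eq Y, hXY]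
  · intro hXY
    rw [h.adjoint_comp_comp_adjoint_eq X, h.adjoint_comp_comp_adjoint_eq Y, hXY]

end IsMPInv

variable {H K : Type*} [NormedAddCommGroup H] [InnerProductSpace ℂ H] [CompleteSpace H]
  [NormedAddCommGroup K] [InnerProductSpace ℂ K] [CompleteSpace K]

theorem stmt19_general (A B : H →L[ℂ] K) (Ad : K →L[ℂ] H)
    (hAd : IsMPInv A Ad) :
    A ∘L ((adjoint A) ∘L A) = A ∘L ((adjoint B) ∘L A) ↔ Ad ∘L (B ∘L Ad) = Ad := by
  calc A ∘L (adjoint A ∘L A) = A ∘L (adjoint B ∘L A)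
      ↔ adjoint (A ∘L (adjoint A ∘L A)) = adjoint (A ∘L (adjoint B ∘L A)) :=
        (LinearIsometryEquiv.injective _).eq_iff.symm
    _ ↔ adjoint A ∘L (A ∘L adjoint A) = adjoint A ∘L (B ∘L adjoint A) := by
        simp only [adjoint_comp, adjoint_adjoint, comp_assoc]
    _ ↔ Ad ∘L (A ∘L Ad) = Ad ∘L (B ∘L Ad) := hAd.adjoint_comp_comp_adjoint_eq_iff A B
    _ ↔ Ad ∘L (B ∘L Ad) = Ad := by rw [hAd.inv_comp_self_comp_inv, eq_comm]

theorem stmt19 (A B : H →L[ℂ] K) (Ad : K →L[ℂ] H)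
    (hA : IsClosed (LinearMap.range (A : H →ₗ[ℂ] K) : Set K)) (hAd : IsMPInv A Ad) :
    A ∘L ((adjoint A) ∘L A) = A ∘L ((adjoint B) ∘L A) ↔ Ad ∘L (B ∘L Ad) = Ad :=
  stmt19_general A B Ad hAd
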